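/- arXiv:2404.11673 — 4 statements merged into one kernel-verified Lean document; each statement's English description precedes it below -/
import Mathlib

section
/- Let S be a binary string (over {0,1} with involution σ ↦ 1−σ). If S ∈ 01·Σ*·(1̄0̄)·(0̄)^k for some k ≥ 2 (i.e., S has prefix 01 and suffix 1̄·0̄^k with k ≥ 2, writing 0̄=1 and 1̄=0), then the only valid hairpin deletion operations on S (in the modified sense: a left or right deletion of length ℓ ≤ ⌊|S|/2⌋ requiring S[1..ℓ] = ⟵S[|S|−ℓ+1..|S|]) are of length 1. -/
/-- characterwise complement followed by reversal: the "reverse complement" ⟵w -/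
def rc (w : List Bool) : List Bool := (w.map (fun b => !b)).reverse

/-- one (modified) hairpin deletion step: remove a prefix (left) or suffix (right)
of length `ℓ ∈ [⌊|S|/2⌋]` that equals the reverse complement of the opposite end. -/
def HDel (S T : List Bool) : Prop :=
  ∃ ℓ, 1 ≤ ℓ ∧ ℓ ≤ S.length / 2 ∧ S.take ℓ = rc (S.drop (S.length - ℓ)) ∧
    (T = S.drop ℓ ∨ T = S.take (S.length - ℓ))

/-- `HDelN n S T`: `T` is obtained from `S` by exactly `n` hairpin deletions. -/
def HDelN : ℕ → List Bool → List Bool → Prop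
  | 0, S, T => S = T
  | n + 1, S, T => ∃ U, HDel S U ∧ HDelN n U T

/-- hairpin deletion distance (∞ if unreachable) -/
noncomputable def HDD (x y : List Bool) : ℕ∞ :=
  sInf {n : ℕ∞ | ∃ m : ℕ, n = (m : ℕ∞) ∧ HDelN m x y}

/-- one (modified) hairpin completion step -/
def HComp (S T : List Bool) : Prop :=
  ∃ ℓ, 1 ≤ ℓ ∧ ℓ ≤ S.length ∧
    (T = S ++ rc (S.take ℓ) ∨ T = rc (S.drop (S.length - ℓ)) ++ S)

def HCompN : ℕ → List Bool → List Bool → Prop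
  | 0, S, T => S = T
  | n + 1, S, T => ∃ U, HComp S U ∧ HCompN n U T

/-- hairpin completion distance (∞ if unreachable) -/
noncomputable def HCD (x y : List Bool) : ℕ∞ :=
  sInf {n : ℕ∞ | ∃ m : ℕ, n = (m : ℕ∞) ∧ HCompN m x y}

/-- `w` concatenated with itself `k` times, `w^k` -/
def repL (w : List Bool) (k : ℕ) : List Bool := (List.replicate k w).flatten

/- If `S[..ℓ] = ⟵S[|S|-ℓ..]` with `ℓ ≥ 2`, then comparing second letters gives `S[1] = ¬S[|S|-2]`.
Here `S[1] = 1` because `S` starts with `01`, while `S[|S|-2] = 1` because `S` ends with `1 1`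
(as `k ≥ 2`), so no deletion of length at least 2 is valid. -/

theorem getElem?_rc {w : List Bool} {i : ℕ} (hi : i < w.length) :
    (rc w)[i]? = w.reverse[i]?.map (!·) := by
  rw [rc, List.getElem?_reverse (by simpa using hi), List.getElem?_reverse hi,
    List.getElem?_map, List.length_map]

theorem getElem?_eq_not_reverse_of_take_eq_rc_drop {S : List Bool} {ℓ i : ℕ}
    (hi : i < ℓ) (hℓ : ℓ ≤ S.length) (h : S.take ℓ = rc (S.drop (S.length - ℓ))) :
    S[i]? = S.reverse[i]?.map (!·) := by
  have hi' := congrArg (·[i]?) h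
  simp only [List.getElem?_take, if_pos hi] at hi'
  rw [hi', getElem?_rc (by simp; omega), ← List.take_reverse, List.getElem?_take, if_pos hi]

/-- If `S` has prefix `01` and suffix `1̄·0̄^k` (with `0̄ = 1`, `1̄ = 0`) for some `k ≥ 2`,
then the only valid (modified) hairpin deletions on `S` are of length 1. -/
theorem hairpin_deletion_length_one
    (S mid : List Bool) (k : ℕ) (hk : 2 ≤ k)
    (hS : S = [false, true] ++ mid ++ (false :: List.replicate k true)) :
    ∀ ℓ, 1 ≤ ℓ → ℓ ≤ S.length / 2 →
      S.take ℓ = rc (S.drop (S.length - ℓ)) → ℓ = 1 := by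
  intro ℓ hℓ hℓS hpal
  by_contra hne
  have hsecond : S[1]? = some true := by simp [hS]
  have hpenultimate : S.reverse[1]? = some true := by
    simp [hS, List.getElem?_append_left (show 1 < (List.replicate k true).length by simp; omega),
      show 1 < k by omega]
  have hmirror := getElem?_eq_not_reverse_of_take_eq_rc_drop (i := 1) (by omega) (by omega) hpal
  simp [hsecond, hpenultimate] at hmirror
end

section
/- Let x be a string over {0,1} with involution σ↦1−σ, and suppose x contains exactly one occurrence of the substring 11(1̄1̄) (where 1̄=0), i.e., exactly one occurrence of 1100. If y is a substring of x containing this occurrence, then y occurs exactly once in x, and any sequence of hairpin deletions transforming x into y never deletes any position of that occurrence of y: every intermediate string x[i..j] satisfies [i_y..j_y] ⊆ [i..j], where x[i_y..j_y] is the occurrence of y. -/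
/-!
A hairpin deletion only ever cuts off a prefix or a suffix, so along a deletion sequence from
`x` to `y` every intermediate string `S` is an infix of `x` and contains `y` as an infix.
Composing the two embeddings places `y` inside `x`; since `y` contains the only occurrence
of `1100` in `x`, `y` sits at a single position of `x`, so the embedding of `y` in `S` is
the restriction of the fixed one `x = a ++ y ++ b`.
-/

theorem HDel.isInfix {S T : List Bool} (h : HDel S T) : T <:+: S := by
  obtain ⟨ℓ, -, -, -, rfl | rfl⟩ := h
  · exact (List.drop_suffix ℓ S).isInfix
  · exact (List.take_prefix _ S).isInfix

theorem isInfix_head_of_isChain_hDel {L : List (List Bool)} {x : List Bool}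
    (hc : L.IsChain HDel) (hx : L.head? = some x) : ∀ S ∈ L, S <:+: x :=
  hc.induction (· <:+: x) L (fun _ _ hST hS => (HDel.isInfix hST).trans hS)
    (fun hne => by
      rw [List.head?_eq_some_head hne, Option.some_inj] at hx; exact hx ▸ List.infix_refl _)

theorem isInfix_getLast_of_isChain_hDel {L : List (List Bool)} {y : List Bool}
    (hc : L.IsChain HDel) (hy : L.getLast? = some y) : ∀ S ∈ L, y <:+: S :=
  hc.backwards_induction (y <:+: ·) L (fun _ _ hST hT => hT.trans (HDel.isInfix hST))
    (fun hne => by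
      rw [List.getLast?_eq_some_getLast hne, Option.some_inj] at hy; exact hy ▸ List.infix_refl _)

theorem List.prefix_drop_length_append_append {α : Type*} (a p w q b : List α) :
    w <+: (a ++ (p ++ w ++ q) ++ b).drop (a.length + p.length) := by
  rw [← List.length_append, List.append_assoc, List.append_assoc, List.append_assoc,
    ← List.append_assoc a p, List.drop_left]
  exact List.prefix_append _ _

theorem List.eq_of_append_append_eq_of_isInfix {α : Type*} {w y a b a' b' : List α}
    (hw : w <:+: y) (huniq : {i | w <+: (a ++ y ++ b).drop i}.Subsingleton)
    (h : a' ++ y ++ b' = a ++ y ++ b) : a' = a ∧ b' = b := by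
  obtain ⟨p, q, rfl⟩ := hw
  have hlen : a'.length = a.length := by
    have := huniq (h ▸ prefix_drop_length_append_append a' p w q b')
      (prefix_drop_length_append_append a p w q b)
    omega
  simp only [List.append_assoc] at h
  obtain ⟨rfl, h⟩ := List.append_inj h hlen
  exact ⟨rfl, by simpa using h⟩

/-- If `x` contains exactly one occurrence of `11·1̄1̄ = 1100`, and `y` is a substring
of `x` containing this occurrence (`x = a ++ y ++ b`), then `y` occurs exactly once
in `x`, and every intermediate string of any sequence of hairpin deletions from `x`
to `y` still contains `y` at the same position (no position of `y` is ever deleted). -/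
theorem never_delete_y
    (x y a b : List Bool)
    (hx : x = a ++ y ++ b)
    (hocc : [true, true, false, false] <:+: y)
    (huniq : ∃! i : ℕ, [true, true, false, false] <+: x.drop i) :
    (∀ a' b' : List Bool, x = a' ++ y ++ b' → a' = a ∧ b' = b) ∧
    (∀ L : List (List Bool), L.head? = some x → L.getLast? = some y →
      L.Chain' HDel →
      ∀ S ∈ L, ∃ a' b' : List Bool, S = a' ++ y ++ b' ∧ a' <:+ a ∧ b' <+: b) := by
  subst hx
  have hpos : ∀ a' b', a' ++ y ++ b' = a ++ y ++ b → a' = a ∧ b' = b := fun _ _ =>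
    List.eq_of_append_append_eq_of_isInfix hocc fun _ hi _ hj => huniq.unique hi hj
  refine ⟨fun a' b' h => hpos a' b' h.symm, fun L hh hl hc S hS => ?_⟩
  obtain ⟨u, v, hSx⟩ := isInfix_head_of_isChain_hDel hc hh S hS
  obtain ⟨a', b', rfl⟩ := isInfix_getLast_of_isChain_hDel hc hl S hS
  obtain ⟨ha, hb⟩ := hpos (u ++ a') (b' ++ v) (by simpa only [List.append_assoc] using hSx)
  exact ⟨a', b', rfl, ⟨u, ha⟩, ⟨v, hb⟩⟩
end

section
/- Let p be a sequence of (modified) hairpin deletions transforming a binary string s into t, where both s and t have prefix 01 and suffix 1̄0̄ (i.e., suffix 0 1 under complement 0̄=1, 1̄=0). Then every intermediate string S_i satisfies S_i[1] = 0 and S_i[|S_i|] = 0̄; moreover S_i[2] = 1 or S_i[|S_i|−1] = 1̄. -/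
/-!
Call `S` `k`-capped if it starts with `0^k` and ends with `0̄^k = 1^k`. If a hairpin deletion
takes `S` to a `k`-capped `U`, then `S` is `k`-capped. A right deletion is a left deletion of the
reverse complements, and cappedness is invariant under `rc`; a left deletion has `S = rc y ++ U`
with `y` a suffix of `U`, so either `1^k` is a suffix of `y`, making `0^k` a prefix of `rc y`, or
`y = 1^j` and `S = 0^j ++ U`. Hence being `1`-capped propagates backwards from `t`, and not being
`2`-capped (`s` starts with `01`) propagates forwards from `s`.
-/

open List

@[simp] lemma rc_append (u v : List Bool) : rc (u ++ v) = rc v ++ rc u := by simp [rc]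

@[simp] lemma rc_rc (w : List Bool) : rc (rc w) = w := by simp [rc, Function.comp_def]

@[simp] lemma rc_replicate (k : ℕ) (b : Bool) : rc (replicate k b) = replicate k (!b) := by
  simp [rc]

lemma List.IsPrefix.rc {u v : List Bool} (h : u <+: v) : _root_.rc u <:+ _root_.rc v := by
  obtain ⟨w, rfl⟩ := h
  exact ⟨_root_.rc w, by simp⟩

lemma List.IsSuffix.rc {u v : List Bool} (h : u <:+ v) : _root_.rc u <+: _root_.rc v := by
  obtain ⟨w, rfl⟩ := h
  exact ⟨_root_.rc w, by simp⟩

def LeftHairpinDel (S U : List Bool) : Prop :=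
  ∃ y, y <:+ U ∧ S = rc y ++ U

lemma HDel.leftHairpinDel_or {S U : List Bool} (h : HDel S U) :
    LeftHairpinDel S U ∨ LeftHairpinDel (rc S) (rc U) := by
  obtain ⟨ℓ, -, hℓ, hpal, rfl | rfl⟩ := h
  · refine .inl ⟨S.drop (S.length - ℓ), ?_, ?_⟩
    · have hdrop : S.drop (S.length - ℓ) = (S.drop ℓ).drop (S.length - ℓ - ℓ) := by
        rw [drop_drop]; congr 1; omega
      exact hdrop ▸ drop_suffix _ _
    · rw [← hpal, take_append_drop]
  · refine .inr ⟨S.drop (S.length - ℓ), ?_, ?_⟩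
    · have h := (take_prefix_take_left (l := S) (show ℓ ≤ S.length - ℓ by omega)).rc
      rwa [hpal, rc_rc] at h
    · rw [← rc_append, take_append_drop]

def Capped (k : ℕ) (S : List Bool) : Prop :=
  replicate k false <+: S ∧ replicate k true <:+ S

lemma Capped.rc {k : ℕ} {S : List Bool} (h : Capped k S) : Capped k (rc S) :=
  ⟨by simpa using h.2.rc, by simpa using h.1.rc⟩

lemma Capped.of_leftHairpinDel {k : ℕ} {S U : List Bool} (hSU : LeftHairpinDel S U)
    (hU : Capped k U) : Capped k S := by
  obtain ⟨y, hyU, rfl⟩ := hSU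
  obtain ⟨hpre, hsuf⟩ := hU
  refine ⟨?_, hsuf.trans (suffix_append _ _)⟩
  rcases suffix_or_suffix_of_suffix hsuf hyU with hy | hy
  · simpa using hy.rc.trans (prefix_append (_root_.rc y) U)
  · obtain ⟨-, hy⟩ := suffix_replicate_iff.mp hy
    rw [hy, rc_replicate, Bool.not_true]
    calc replicate k false <+: replicate y.length false ++ replicate k false := by
          rw [replicate_append_replicate, prefix_replicate_iff]; simp
      _ <+: replicate y.length false ++ U := (prefix_append_right_inj _).mpr hpre

lemma Capped.of_hDel {k : ℕ} {S U : List Bool} (hSU : HDel S U) (hU : Capped k U) :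
    Capped k S := by
  rcases hSU.leftHairpinDel_or with h | h
  · exact hU.of_leftHairpinDel h
  · simpa using (hU.rc.of_leftHairpinDel h).rc

lemma Capped.head?_getLast? {S : List Bool} (h : Capped 1 S) :
    S.head? = some false ∧ S.getLast? = some true := by
  refine ⟨?_, ?_⟩
  · obtain ⟨u, hu⟩ := h.1
    simp [← hu]
  · obtain ⟨v, hv⟩ := h.2
    simp [← hv]

lemma Capped.getElem?_one_or_getElem?_length_sub_two {S : List Bool} (h1 : Capped 1 S)
    (h2 : ¬ Capped 2 S) : S[1]? = some true ∨ S[S.length - 2]? = some false := by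
  obtain ⟨h0, hlast⟩ := h1.head?_getLast?
  rw [head?_eq_getElem?] at h0
  rw [getLast?_eq_getElem?] at hlast
  have hlen : 2 ≤ S.length := by
    by_contra hlt
    rw [show S.length - 1 = 0 by omega, h0] at hlast
    simp at hlast
  by_contra! h
  have hsnd : S[1]? = some false := by
    rw [getElem?_eq_getElem (show 1 < S.length by omega)] at h ⊢
    simpa using h.1
  have hpen : S[S.length - 2]? = some true := by
    rw [getElem?_eq_getElem (show S.length - 2 < S.length by omega)] at h ⊢
    simpa using h.2
  have hidx : 1 + S.length - 2 = S.length - 1 := by omega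
  refine h2 ⟨prefix_iff_getElem?.mpr fun i hi => ?_,
    suffix_iff_getElem?.mpr ⟨by simpa, fun i hi => ?_⟩⟩
  all_goals
    simp only [length_replicate] at hi ⊢
    interval_cases i <;> simpa [hidx]

theorem always_01_or_10_general
    (s t : List Bool)
    (hs1 : [false, true] <+: s)
    (ht1 : [false, true] <+: t) (ht2 : [false, true] <:+ t)
    (L : List (List Bool)) (hhead : L.head? = some s) (hlast : L.getLast? = some t)
    (hchain : L.Chain' HDel) :
    ∀ S ∈ L, S.head? = some false ∧ S.getLast? = some true ∧
      (S[1]? = some true ∨ S[S.length - 2]? = some false) := by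
  have capped_one : ∀ S ∈ L, Capped 1 S :=
    hchain.backwards_induction _ _ (fun _ _ hSU hU => hU.of_hDel hSU) fun hne =>
      (getLast_eq_iff_getLast?_eq_some hne).mpr hlast ▸
        ⟨IsPrefix.trans ⟨[true], rfl⟩ ht1, IsSuffix.trans ⟨[false], rfl⟩ ht2⟩
  have not_capped_two : ∀ S ∈ L, ¬ Capped 2 S :=
    hchain.induction _ _ (fun _ _ hSU hS hU => hS (hU.of_hDel hSU)) fun hne hs => by
      rw [(head_eq_iff_head?_eq_some hne).mpr hhead] at hs
      rcases prefix_or_prefix_of_prefix hs.1 hs1 with h | h <;> simp [replicate] at h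
  intro S hS
  have hcap := capped_one S hS
  exact ⟨hcap.head?_getLast?.1, hcap.head?_getLast?.2,
    hcap.getElem?_one_or_getElem?_length_sub_two (not_capped_two S hS)⟩

/-- If a sequence of (modified) hairpin deletions transforms `s` into `t`, where both
`s` and `t` have prefix `01` and suffix `1̄0̄ = 01`, then every intermediate string `S`
starts with `0` and ends with `0̄ = 1`; moreover `S[2] = 1` or `S[|S|−1] = 1̄ = 0`. -/
theorem always_01_or_10
    (s t : List Bool)
    (hs1 : [false, true] <+: s) (hs2 : [false, true] <:+ s)
    (ht1 : [false, true] <+: t) (ht2 : [false, true] <:+ t)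
    (L : List (List Bool)) (hhead : L.head? = some s) (hlast : L.getLast? = some t)
    (hchain : L.Chain' HDel) :
    ∀ S ∈ L, S.head? = some false ∧ S.getLast? = some true ∧
      (S[1]? = some true ∨ S[S.length - 2]? = some false) :=
  always_01_or_10_general s t hs1 ht1 ht2 L hhead hlast hchain
end

section
/- Let x ∈ {0,1}* with complement σ↦1−σ, and suppose x ∈ 010^a1·Σ*·(reverse complement of 010^b1·Σ*) with a ≠ b. Then a single left hairpin deletion on x removes at most one occurrence of the symbol 1, and symmetrically a single right hairpin deletion removes at most one occurrence of 1̄. -/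
lemma rc_count (w : List Bool) : (rc w).count true = w.count false := by
  induction w with
  | nil => rfl
  | cons h t ih => cases h <;> simp_all [rc, List.count_cons]

lemma take_rc_shrink (x : List Bool) (ℓ k : ℕ) (hk : k ≤ ℓ) (hℓ : ℓ ≤ x.length)
    (h : x.take ℓ = rc (x.drop (x.length - ℓ))) :
    x.take k = rc (x.drop (x.length - k)) := by
  have h2 := congrArg (List.take k) h
  rw [List.take_take, min_eq_left hk] at h2
  rw [h2]
  unfold rc
  rw [List.take_reverse]
  congr 1
  rw [List.length_map, List.length_drop, ← List.map_drop, List.drop_drop]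
  congr 2
  omega

/-- If `x` has prefix `010^a·1` and suffix `⟵(0·010^b·1) = 0·1^b·0·1` with `a ≠ b`, then
a single left hairpin deletion removes at most one `1`, and a single right hairpin
deletion removes at most one `1̄ = 0`. -/
theorem single_one_deleted
    (a b : ℕ) (hab : a ≠ b) (mid x : List Bool)
    (hx : x = ([false, true] ++ List.replicate a false ++ [true]) ++ mid ++
          (false :: (List.replicate b true ++ [false, true]))) :
    ∀ ℓ, 1 ≤ ℓ → ℓ ≤ x.length / 2 →
      x.take ℓ = rc (x.drop (x.length - ℓ)) →
      (x.take ℓ).count true ≤ 1 ∧ (x.drop (x.length - ℓ)).count false ≤ 1 := by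
  intro ℓ h1 h2 h3
  have hℓn : ℓ ≤ x.length := le_trans h2 (Nat.div_le_self _ _)
  have hcc : (x.take ℓ).count true = (x.drop (x.length - ℓ)).count false := by
    rw [h3, rc_count]
  have hlen : x.length = a + 3 + mid.length + (b + 3) := by
    subst hx; simp; omega
  rcases Nat.lt_or_ge a b with hab' | hge
  · -- a < b : show ℓ ≤ a + 2
    have hle : ℓ ≤ a + 2 := by
      by_contra hcon
      push_neg at hcon
      have h4 := take_rc_shrink x ℓ (a+3) (by omega) hℓn h3
      have htake : x.take (a+3) = [false, true] ++ List.replicate a false ++ [true] := by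
        rw [hx, List.append_assoc]
        rw [show a + 3 = ([false, true] ++ List.replicate a false ++ [true]).length by simp]
        exact List.take_left
      have hx' : x = (([false, true] ++ List.replicate a false ++ [true]) ++ mid ++
          (false :: List.replicate (b - (a+1)) true)) ++
          (List.replicate (a+1) true ++ [false, true]) := by
        rw [hx, show b = (b - (a+1)) + (a+1) by omega, List.replicate_add]
        simp [List.replicate_add]
      have hdrop : x.drop (x.length - (a+3)) =
          List.replicate (a+1) true ++ [false, true] := by
        rw [show x.length - (a+3) = (([false, true] ++ List.replicate a false ++ [true]) ++ mid ++
            (false :: List.replicate (b - (a+1)) true)).length by simp [hlen]; omega]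
        rw [hx']
        exact List.drop_left
      have hc := congrArg (List.count true) h4
      rw [rc_count, htake, hdrop] at hc
      simp [List.count_append, List.count_replicate] at hc
    have htk : x.take ℓ = (false :: true :: List.replicate a false).take ℓ := by
      rw [hx]
      rw [show ([false, true] ++ List.replicate a false ++ [true]) ++ mid ++
            (false :: (List.replicate b true ++ [false, true])) =
          (false :: true :: List.replicate a false) ++
            ([true] ++ mid ++ (false :: (List.replicate b true ++ [false, true]))) by simp]
      exact List.take_append_of_le_length (by simp; omega)
    have hcnt : (x.take ℓ).count true ≤ 1 := by
      rw [htk]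
      calc ((false :: true :: List.replicate a false).take ℓ).count true
          ≤ (false :: true :: List.replicate a false).count true :=
            (List.take_sublist _ _).count_le _
        _ = 1 := by simp [List.count_cons, List.count_replicate]
    exact ⟨hcnt, by rw [← hcc]; exact hcnt⟩
  · -- b < a : show ℓ ≤ b + 2
    have hba : b < a := by omega
    have hle : ℓ ≤ b + 2 := by
      by_contra hcon
      push_neg at hcon
      have h4 := take_rc_shrink x ℓ (b+3) (by omega) hℓn h3
      have htake : x.take (b+3) = false :: true :: List.replicate (b+1) false := by
        rw [hx]
        rw [show ([false, true] ++ List.replicate a false ++ [true]) ++ mid ++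
              (false :: (List.replicate b true ++ [false, true])) =
            (false :: true :: List.replicate a false) ++
              ([true] ++ mid ++ (false :: (List.replicate b true ++ [false, true]))) by simp]
        rw [List.take_append_of_le_length (by simp; omega)]
        simp [List.take_replicate, show min (b+1) a = b+1 by omega]
      have hdrop : x.drop (x.length - (b+3)) =
          false :: (List.replicate b true ++ [false, true]) := by
        rw [show x.length - (b+3) = (([false, true] ++ List.replicate a false ++ [true]) ++
            mid).length by simp [hlen]; omega]
        rw [hx]
        exact List.drop_left
      have hc := congrArg (List.count true) h4
      rw [rc_count, htake, hdrop] at hc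
      simp [List.count_append, List.count_cons, List.count_replicate] at hc
    have hdr : x.drop (x.length - ℓ) =
        (List.replicate b true ++ [false, true]).drop (b + 2 - ℓ) := by
      have hx' : x = (([false, true] ++ List.replicate a false ++ [true]) ++ mid ++ [false]) ++
          (List.replicate b true ++ [false, true]) := by rw [hx]; simp
      rw [show x.length - ℓ = (([false, true] ++ List.replicate a false ++ [true]) ++ mid ++
          [false]).length + (b + 2 - ℓ) by simp [hlen]; omega]
      rw [hx', List.drop_append]; simp
    have hcnt : (x.drop (x.length - ℓ)).count false ≤ 1 := by
      rw [hdr]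
      calc ((List.replicate b true ++ [false, true]).drop (b + 2 - ℓ)).count false
          ≤ (List.replicate b true ++ [false, true]).count false :=
            (List.drop_sublist _ _).count_le _
        _ = 1 := by simp [List.count_append, List.count_cons, List.count_replicate]
    exact ⟨by rw [hcc]; exact hcnt, hcnt⟩
end
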